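/- The representation coefficient of a tensor product with respect to π = π₁ of G_{5,3} factors as V_g^π(f₁⊗f₂)(x₂,x₃,x₄,x₅) = S_φ f₁(x₃,x₄) · S_φ(N_{x₄} f₂)(x₅,-x₂), where g = φ⊗φ is the two-dimensional Gaussian. -/

import Mathlib

open MeasureTheory

/-- The Gaussian `φ(t) = e^{-π t²}`. -/
noncomputable def gauss1 (t : ℝ) : ℂ := Complex.exp ((-(Real.pi * t ^ 2) : ℝ) : ℂ)

/-- Chirp `N_u f(t) = e^{-iπ u t²} f(t)`. -/
noncomputable def chirpOp (u : ℝ) (f : ℝ → ℂ) : ℝ → ℂ :=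
  fun t => Complex.exp (-(Real.pi * u * t ^ 2 : ℝ) * Complex.I) * f t

/-- The short-time Fourier transform on `ℝ` with Gaussian window:
`S_φ f(x,ξ) = ∫ f(t) φ(t-x) e^{-2πi tξ} dt`. -/
noncomputable def stftGauss (f : ℝ → ℂ) (x ξ : ℝ) : ℂ :=
  ∫ t : ℝ, f t * (starRingEnd ℂ) (gauss1 (t - x)) *
    Complex.exp (-(2 * Real.pi * t * ξ : ℝ) * Complex.I)

/-- The (cleaned-up) representation coefficient for `π₁` of `G_{5,3}` with window
`g = φ⊗φ`:
`V_g f(x₂,x₃,x₄,x₅) = ∫∫ f(s,t) conj(g(s-x₃,t-x₅)) e^{-2πi(x₄s - x₂t + ½x₄t²)} ds dt`. -/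
noncomputable def Vg53 (f : ℝ × ℝ → ℂ) (x₂ x₃ x₄ x₅ : ℝ) : ℂ :=
  ∫ q : ℝ × ℝ, f q * (starRingEnd ℂ) (gauss1 (q.1 - x₃) * gauss1 (q.2 - x₅)) *
    Complex.exp (-(2 * Real.pi * (x₄ * q.1 - x₂ * q.2 + (1 / 2) * x₄ * q.2 ^ 2) : ℝ)
      * Complex.I)

noncomputable def stftGaussIntegrand (f : ℝ → ℂ) (x ξ t : ℝ) : ℂ :=
  f t * (starRingEnd ℂ) (gauss1 (t - x)) * Complex.exp (-(2 * Real.pi * t * ξ : ℝ) * Complex.I)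

/-- The quadratic part `½x₄t²` of the phase is exactly what the chirp `N_{x₄}` absorbs. -/
lemma exp_Vg53_phase_eq (x₂ x₄ s t : ℝ) :
    Complex.exp (-(2 * Real.pi * (x₄ * s - x₂ * t + (1 / 2) * x₄ * t ^ 2) : ℝ) * Complex.I)
      = Complex.exp (-(2 * Real.pi * s * x₄ : ℝ) * Complex.I) *
        (Complex.exp (-(Real.pi * x₄ * t ^ 2 : ℝ) * Complex.I) *
          Complex.exp (-(2 * Real.pi * t * -x₂ : ℝ) * Complex.I)) := by
  rw [← Complex.exp_add, ← Complex.exp_add]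
  congr 1
  push_cast
  ring

lemma Vg53_integrand_tensor (f₁ f₂ : ℝ → ℂ) (x₂ x₃ x₄ x₅ : ℝ) (q : ℝ × ℝ) :
    f₁ q.1 * f₂ q.2 * (starRingEnd ℂ) (gauss1 (q.1 - x₃) * gauss1 (q.2 - x₅)) *
      Complex.exp (-(2 * Real.pi * (x₄ * q.1 - x₂ * q.2 + (1 / 2) * x₄ * q.2 ^ 2) : ℝ)
        * Complex.I)
      = stftGaussIntegrand f₁ x₃ x₄ q.1 * stftGaussIntegrand (chirpOp x₄ f₂) x₅ (-x₂) q.2 := by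
  rw [stftGaussIntegrand, stftGaussIntegrand, map_mul, exp_Vg53_phase_eq, chirpOp]
  ring

theorem g53_coefficient_tensor_general (f₁ f₂ : ℝ → ℂ) (x₂ x₃ x₄ x₅ : ℝ) :
    Vg53 (fun q => f₁ q.1 * f₂ q.2) x₂ x₃ x₄ x₅
      = stftGauss f₁ x₃ x₄ * stftGauss (chirpOp x₄ f₂) x₅ (-x₂) := by
  simp only [Vg53, Vg53_integrand_tensor]
  rw [Measure.volume_eq_prod, integral_prod_mul]
  rfl

/-- The representation coefficient of a tensor product factors:
`V_{φ⊗φ}(f₁⊗f₂)(x₂,x₃,x₄,x₅) = S_φ f₁(x₃,x₄) · S_φ(N_{x₄} f₂)(x₅,-x₂)`. -/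
theorem g53_coefficient_tensor (f₁ f₂ : ℝ → ℂ)
    (hf₁ : MemLp f₁ 2 volume) (hf₂ : MemLp f₂ 2 volume) (x₂ x₃ x₄ x₅ : ℝ) :
    Vg53 (fun q => f₁ q.1 * f₂ q.2) x₂ x₃ x₄ x₅
      = stftGauss f₁ x₃ x₄ * stftGauss (chirpOp x₄ f₂) x₅ (-x₂) :=
  g53_coefficient_tensor_general f₁ f₂ x₂ x₃ x₄ x₅
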